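/- Let 𝒞 be a class of finite graphs that is closed under taking subgraphs (deletion of vertices and edges). If for every ℓ there exists a graph in 𝒞 having more than ℓ vertices of degree greater than 2ℓ, then 𝒞 contains every finite star forest. -/
import Mathlib


/-- A graph is a star forest if there is a set `C` of centres such that every edge has exactly
one endpoint in `C`, and every vertex outside `C` has degree at most one. -/
def IsStarForest {V : Type*} (H : SimpleGraph V) : Prop :=
  ∃ C : Set V, (∀ u v, H.Adj u v → (u ∈ C ∧ v ∉ C) ∨ (u ∉ C ∧ v ∈ C)) ∧
    ∀ v ∉ C, (H.neighborSet v).ncard ≤ 1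

section StarForestAux

open scoped Classical

variable {m n : ℕ}

/-- Rank: centres come before leaves, within each group ordered by index. -/
noncomputable def rkSF (C : Set (Fin m)) (v : Fin m) : ℕ :=
  (if v ∈ C then 0 else m) + v.val

lemma rkSF_inj (C : Set (Fin m)) : Function.Injective (rkSF C) := by
  intro u v h
  unfold rkSF at h
  have hu := u.isLt
  have hv := v.isLt
  split_ifs at h <;> [skip; omega; omega; skip] <;> exact Fin.ext (by omega)

/-- The property a chosen value `w` for vertex `v` must satisfy, relative to the values of
`f` at vertices of smaller rank. -/
def GoodSF (G : SimpleGraph (Fin n)) (H : SimpleGraph (Fin m)) (C : Set (Fin m))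
    (f : Fin m → Fin n) (v : Fin m) (w : Fin n) : Prop :=
  (∀ u, rkSF C u < rkSF C v → f u ≠ w) ∧
  (v ∈ C → 2 * m < (G.neighborSet w).ncard) ∧
  (∀ u, H.Adj v u → rkSF C u < rkSF C v → G.Adj (f u) w)

lemma goodSF_congr {G : SimpleGraph (Fin n)} {H : SimpleGraph (Fin m)} {C : Set (Fin m)}
    {f f' : Fin m → Fin n} {v : Fin m} {w : Fin n}
    (hff : ∀ u, rkSF C u < rkSF C v → f u = f' u) :
    GoodSF G H C f v w ↔ GoodSF G H C f' v w := by
  unfold GoodSF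
  constructor <;> rintro ⟨h1, h2, h3⟩ <;> refine ⟨?_, h2, ?_⟩
  · intro u hu; rw [← hff u hu]; exact h1 u hu
  · intro u hu h; rw [← hff u h]; exact h3 u hu h
  · intro u hu; rw [hff u hu]; exact h1 u hu
  · intro u hu h; rw [hff u h]; exact h3 u hu h

/-- At every step a good value exists, provided earlier centres got big-degree images. -/
lemma goodSF_exists (G : SimpleGraph (Fin n)) (H : SimpleGraph (Fin m)) (C : Set (Fin m))
    (hC : ∀ u v, H.Adj u v → (u ∈ C ∧ v ∉ C) ∨ (u ∉ C ∧ v ∈ C))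
    (hL : ∀ v ∉ C, (H.neighborSet v).ncard ≤ 1)
    (hS : m < {x : Fin n | 2 * m < (G.neighborSet x).ncard}.ncard)
    (f : Fin m → Fin n) (v : Fin m)
    (hf : ∀ u, rkSF C u < rkSF C v → u ∈ C → 2 * m < (G.neighborSet (f u)).ncard) :
    ∃ w, GoodSF G H C f v w := by
  set T : Set (Fin n) := f '' {u | rkSF C u < rkSF C v} with hT
  have hTcard : T.ncard ≤ m := by
    calc T.ncard ≤ {u | rkSF C u < rkSF C v}.ncard := Set.ncard_image_le (Set.toFinite _)
    _ ≤ (Set.univ : Set (Fin m)).ncard := Set.ncard_le_ncard (Set.subset_univ _) Set.finite_univ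
    _ = m := by rw [Set.ncard_univ]; simp
  by_cases hv : v ∈ C
  · -- centre: pick an unused big-degree vertex
    have hne : ({x : Fin n | 2 * m < (G.neighborSet x).ncard} \ T).Nonempty := by
      by_contra h
      rw [Set.not_nonempty_iff_eq_empty, Set.diff_eq_empty] at h
      exact absurd (Set.ncard_le_ncard h (Set.toFinite _)) (by omega)
    obtain ⟨w, hwS, hwT⟩ := hne
    refine ⟨w, ?_, fun _ => hwS, ?_⟩
    · intro u hu he; exact hwT ⟨u, hu, he⟩
    · intro u hu hlt
      exfalso
      have huC : u ∉ C := by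
        rcases hC v u hu with ⟨_, h⟩ | ⟨h, _⟩
        · exact h
        · exact absurd hv h
      unfold rkSF at hlt
      simp only [hv, huC, if_true, if_false] at hlt
      omega
  · by_cases hadj : ∃ u0, H.Adj v u0
    · obtain ⟨u0, hu0⟩ := hadj
      have hu0C : u0 ∈ C := by
        rcases hC v u0 hu0 with ⟨h, _⟩ | ⟨_, h⟩
        · exact absurd h hv
        · exact h
      have hu0lt : rkSF C u0 < rkSF C v := by
        unfold rkSF
        simp only [hu0C, hv, if_true, if_false]
        have := u0.isLt
        omega
      have hdeg : 2 * m < (G.neighborSet (f u0)).ncard := hf u0 hu0lt hu0C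
      have hne : (G.neighborSet (f u0) \ T).Nonempty := by
        by_contra h
        rw [Set.not_nonempty_iff_eq_empty, Set.diff_eq_empty] at h
        exact absurd (Set.ncard_le_ncard h (Set.toFinite _)) (by omega)
      obtain ⟨w, hwN, hwT⟩ := hne
      refine ⟨w, ?_, fun h => absurd h hv, ?_⟩
      · intro u hu he; exact hwT ⟨u, hu, he⟩
      · intro u hu _
        have : u = u0 := by
          by_contra hne'
          have : 1 < (H.neighborSet v).ncard :=
            (Set.one_lt_ncard (Set.toFinite _)).2 ⟨u, hu, u0, hu0, hne'⟩
          exact absurd (hL v hv) (by omega)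
        rw [this]; exact hwN
    · -- isolated leaf: pick any unused vertex
      have hn : m < n := by
        obtain ⟨x, hx⟩ := Set.nonempty_of_ncard_ne_zero (by omega :
          {x : Fin n | 2 * m < (G.neighborSet x).ncard}.ncard ≠ 0)
        have : (G.neighborSet x).ncard ≤ n := by
          calc (G.neighborSet x).ncard ≤ (Set.univ : Set (Fin n)).ncard :=
            Set.ncard_le_ncard (Set.subset_univ _) Set.finite_univ
          _ = n := by rw [Set.ncard_univ]; simp
        simp only [Set.mem_setOf_eq] at hx
        omega
      have hne : ((Set.univ : Set (Fin n)) \ T).Nonempty := by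
        by_contra h
        rw [Set.not_nonempty_iff_eq_empty, Set.diff_eq_empty] at h
        have := Set.ncard_le_ncard h (Set.toFinite _)
        rw [Set.ncard_univ] at this
        simp at this
        omega
      obtain ⟨w, _, hwT⟩ := hne
      refine ⟨w, ?_, fun h => absurd h hv, ?_⟩
      · intro u hu he; exact hwT ⟨u, hu, he⟩
      · intro u hu _; exact absurd ⟨u, hu⟩ hadj

/-- The greedy embedding. -/
noncomputable def embSF (hn : 0 < n) (G : SimpleGraph (Fin n)) (H : SimpleGraph (Fin m))
    (C : Set (Fin m)) (v : Fin m) : Fin n :=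
  if h : ∃ w, GoodSF G H C
      (fun u => if _ : rkSF C u < rkSF C v then embSF hn G H C u else ⟨0, hn⟩) v w
  then h.choose else ⟨0, hn⟩
termination_by rkSF C v

lemma embSF_good (hn : 0 < n) (G : SimpleGraph (Fin n)) (H : SimpleGraph (Fin m))
    (C : Set (Fin m))
    (hC : ∀ u v, H.Adj u v → (u ∈ C ∧ v ∉ C) ∨ (u ∉ C ∧ v ∈ C))
    (hL : ∀ v ∉ C, (H.neighborSet v).ncard ≤ 1)
    (hS : m < {x : Fin n | 2 * m < (G.neighborSet x).ncard}.ncard) :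
    ∀ v, GoodSF G H C (embSF hn G H C) v (embSF hn G H C v) := by
  suffices h : ∀ k v, rkSF C v = k → GoodSF G H C (embSF hn G H C) v (embSF hn G H C v) by
    intro v; exact h _ v rfl
  intro k
  induction k using Nat.strong_induction_on with
  | _ k ih =>
  intro v hk
  subst hk
  set f' : Fin m → Fin n :=
    (fun u => if _ : rkSF C u < rkSF C v then embSF hn G H C u else ⟨0, hn⟩) with hf'
  have hagree : ∀ u, rkSF C u < rkSF C v → embSF hn G H C u = f' u := by
    intro u hu; simp only [hf', dif_pos hu]
  have hex : ∃ w, GoodSF G H C f' v w := by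
    apply goodSF_exists G H C hC hL hS
    intro u hu huC
    have := (ih (rkSF C u) hu u rfl).2.1 huC
    rwa [hagree u hu] at this
  have heq : embSF hn G H C v = hex.choose := by
    rw [embSF]
    simp only [← hf', dif_pos hex]
  rw [heq]
  exact (goodSF_congr hagree).2 hex.choose_spec

end StarForestAux

/-- Let `𝒞` be a class of finite graphs closed under taking subgraphs (up to isomorphism).
If for every `ℓ` some graph in `𝒞` has more than `ℓ` vertices of degree greater than `2ℓ`
(i.e. `𝒞` does not have almost bounded degree), then `𝒞` contains every finite star forest. -/
theorem star_forests_in_class_without_almost_bounded_degree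
    (𝒞 : ∀ n : ℕ, SimpleGraph (Fin n) → Prop)
    (hclosed : ∀ {n m : ℕ} (G : SimpleGraph (Fin n)) (H : SimpleGraph (Fin m)), 𝒞 n G →
      (∃ f : Fin m → Fin n, Function.Injective f ∧ ∀ u v, H.Adj u v → G.Adj (f u) (f v)) →
      𝒞 m H)
    (hunbdd : ∀ ℓ : ℕ, ∃ (n : ℕ) (G : SimpleGraph (Fin n)), 𝒞 n G ∧
      ℓ < {v : Fin n | 2 * ℓ < (G.neighborSet v).ncard}.ncard) :
    ∀ (m : ℕ) (H : SimpleGraph (Fin m)), IsStarForest H → 𝒞 m H := by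
  intro m H hSF
  obtain ⟨C, hC, hL⟩ := hSF
  obtain ⟨n, G, hG, hS⟩ := hunbdd m
  have hn : 0 < n := by
    obtain ⟨x, _⟩ := Set.nonempty_of_ncard_ne_zero (by omega :
      {v : Fin n | 2 * m < (G.neighborSet v).ncard}.ncard ≠ 0)
    exact x.pos
  have hgood := embSF_good hn G H C hC hL hS
  refine hclosed G H hG ⟨embSF hn G H C, ?_, ?_⟩
  · intro u v huv
    by_contra hne
    rcases Nat.lt_or_ge (rkSF C u) (rkSF C v) with h | h
    · exact (hgood v).1 u h huv
    · rcases Nat.lt_or_ge (rkSF C v) (rkSF C u) with h' | h'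
      · exact (hgood u).1 v h' huv.symm
      · exact hne (rkSF_inj C (by omega))
  · intro u v huv
    rcases hC u v huv with ⟨huC, hvC⟩ | ⟨huC, hvC⟩
    · have hlt : rkSF C u < rkSF C v := by
        unfold rkSF
        simp only [huC, hvC, if_true, if_false]
        have := u.isLt
        omega
      exact (hgood v).2.2 u huv.symm hlt
    · have hlt : rkSF C v < rkSF C u := by
        unfold rkSF
        simp only [huC, hvC, if_true, if_false]
        have := v.isLt
        omega
      exact ((hgood u).2.2 v huv hlt).symm
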